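/- Let n ≥ 1 and let f₀, f₁, …, f_{k−1} : (Fin n → Bool) → (Fin n → Bool) be functions each of which has a pass-through coordinate, and let f = f_{k−1} ∘ f_{k−2} ∘ ⋯ ∘ f₀. Then f is not a quasi-bijection. -/

import Mathlib

/-- `j` is a pass-through coordinate of `f`: `f` copies coordinate `j` through,
and no other output coordinate depends on input coordinate `j`. -/
def PassThrough {n : ℕ} (f : (Fin n → Bool) → (Fin n → Bool)) (j : Fin n) : Prop :=
  (∀ x, f x j = x j) ∧
  ∀ l : Fin n, l ≠ j → ∀ x x' : Fin n → Bool,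
    (∀ i : Fin n, i ≠ j → x i = x' i) → f x l = f x' l

/-- `f` is a quasi-bijection if exactly one element has no preimage under `f`. -/
def QuasiBijective {α : Type*} (f : α → α) : Prop :=
  ∃! y : α, ∀ x : α, f x ≠ y

/-- The composition `f_{k-1} ∘ f_{k-2} ∘ ⋯ ∘ f₀` of a finite family of self-maps
(`f 0` is applied first). -/
def compFamily {α : Type*} {k : ℕ} (f : Fin k → α → α) : α → α :=
  (List.ofFn f).foldl (fun acc g => g ∘ acc) id

/-!
A pass-through coordinate `j` of `g` makes `g` commute with the fixed-point-free involution
`flipAt j` negating coordinate `j`, so the complement of the range of `g` is closed under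
`flipAt j`: it is empty or has at least two points. Hence if `g ∘ G` misses at most one point,
so does `g`, which is then surjective and, the cube being finite, bijective; and then `G` misses
at most one point as well. By induction on the number of factors the composite is surjective,
whereas a quasi-bijection misses exactly one point.
-/

open Function Set

section General

variable {α : Type*}

theorem QuasiBijective.range_compl_subsingleton {f : α → α} (hf : QuasiBijective f) :
    (range f)ᶜ.Subsingleton := by
  obtain ⟨y, -, hunique⟩ := hf
  have hmem : ∀ z ∈ (range f)ᶜ, z = y := fun z hz =>
    hunique z fun x hx => hz ⟨x, hx⟩
  exact fun a ha b hb => (hmem a ha).trans (hmem b hb).symm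

theorem QuasiBijective.not_surjective {f : α → α} (hf : QuasiBijective f) : ¬ Surjective f := by
  obtain ⟨y, hy, -⟩ := hf
  exact fun hsurj => (hsurj y).elim hy

theorem surjective_of_commute_of_range_compl_subsingleton {g σ : α → α} (hσ : Involutive σ)
    (hσ_ne : ∀ x, σ x ≠ x) (hcomm : Function.Commute g σ) (hg : (range g)ᶜ.Subsingleton) :
    Surjective g := by
  intro y
  by_contra hy
  have hσy : σ y ∉ range g := by
    rintro ⟨x, hx⟩
    exact hy ⟨σ x, by rw [hcomm x, hx, hσ y]⟩
  exact hσ_ne y (hg (show σ y ∈ (range g)ᶜ from hσy) (show y ∈ (range g)ᶜ from hy))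

theorem Function.Bijective.range_comp_compl_subsingleton_iff {g : α → α} (hg : Bijective g)
    (G : α → α) : (range (g ∘ G))ᶜ.Subsingleton ↔ (range G)ᶜ.Subsingleton := by
  rw [range_comp, ← image_compl_eq hg, hg.injective.subsingleton_image_iff]

theorem compFamily_zero (f : Fin 0 → α → α) : compFamily f = id := rfl

theorem compFamily_succ {k : ℕ} (f : Fin (k + 1) → α → α) :
    compFamily f = f (Fin.last k) ∘ compFamily fun i => f i.castSucc := by
  simp only [compFamily, List.ofFn_succ', List.concat_eq_append, List.foldl_concat]

end General

section PassThrough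

variable {n : ℕ}

def flipAt (j : Fin n) (x : Fin n → Bool) : Fin n → Bool :=
  update x j (!x j)

theorem flipAt_apply_self (j : Fin n) (x : Fin n → Bool) : flipAt j x j = !x j :=
  update_self j _ x

theorem flipAt_apply_of_ne {j i : Fin n} (h : i ≠ j) (x : Fin n → Bool) : flipAt j x i = x i :=
  update_of_ne h _ x

theorem flipAt_ne_self (j : Fin n) (x : Fin n → Bool) : flipAt j x ≠ x := fun h => by
  simpa [flipAt_apply_self] using congrFun h j

theorem flipAt_involutive (j : Fin n) : Involutive (flipAt j) := fun x => by
  ext i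
  by_cases h : i = j
  · subst h
    simp only [flipAt_apply_self, Bool.not_not]
  · simp only [flipAt_apply_of_ne h]

theorem PassThrough.commute_flipAt {g : (Fin n → Bool) → Fin n → Bool} {j : Fin n}
    (hg : PassThrough g j) : Function.Commute g (flipAt j) := fun x => by
  ext i
  by_cases h : i = j
  · subst h
    rw [hg.1, flipAt_apply_self, flipAt_apply_self, hg.1]
  · rw [flipAt_apply_of_ne h]
    exact hg.2 i h _ _ fun i' hi' => flipAt_apply_of_ne hi' x

theorem PassThrough.bijective_of_range_compl_subsingleton {g : (Fin n → Bool) → Fin n → Bool}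
    {j : Fin n} (hg : PassThrough g j) (hrange : (range g)ᶜ.Subsingleton) : Bijective g :=
  Finite.surjective_iff_bijective.mp <| surjective_of_commute_of_range_compl_subsingleton
    (flipAt_involutive j) (flipAt_ne_self j) hg.commute_flipAt hrange

theorem surjective_compFamily_of_range_compl_subsingleton {k : ℕ}
    (f : Fin k → (Fin n → Bool) → Fin n → Bool) (hpass : ∀ i, ∃ j, PassThrough (f i) j)
    (hrange : (range (compFamily f))ᶜ.Subsingleton) : Surjective (compFamily f) := by
  induction k with
  | zero => exact compFamily_zero f ▸ surjective_id
  | succ k ih =>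
    rw [compFamily_succ] at hrange ⊢
    obtain ⟨j, hj⟩ := hpass (Fin.last k)
    have hlast : Bijective (f (Fin.last k)) := hj.bijective_of_range_compl_subsingleton <|
      hrange.anti <| compl_subset_compl.mpr <| range_comp_subset_range _ _
    exact hlast.surjective.comp <| ih _ (fun i => hpass i.castSucc) <|
      (hlast.range_comp_compl_subsingleton_iff _).mp hrange

end PassThrough

theorem comp_passThrough_not_quasiBijective_general {n : ℕ} {k : ℕ}
    (f : Fin k → (Fin n → Bool) → (Fin n → Bool))
    (hpass : ∀ i : Fin k, ∃ j : Fin n, PassThrough (f i) j) :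
    ¬ QuasiBijective (compFamily f) := fun hq =>
  hq.not_surjective <|
    surjective_compFamily_of_range_compl_subsingleton f hpass hq.range_compl_subsingleton

theorem comp_passThrough_not_quasiBijective {n : ℕ} (hn : 1 ≤ n) {k : ℕ}
    (f : Fin k → (Fin n → Bool) → (Fin n → Bool))
    (hpass : ∀ i : Fin k, ∃ j : Fin n, PassThrough (f i) j) :
    ¬ QuasiBijective (compFamily f) :=
  comp_passThrough_not_quasiBijective_general f hpass
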